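/- arXiv:1403.8148 — 4 statements merged into one kernel-verified Lean document; each statement's English description precedes it below -/
import Mathlib

section
/- Let P be a prime ideal of k[x_1,...,x_n] and let M(P) be the associated algebraic matroid on the images of the variables in Frac(k[x]/P). A subset C ⊆ {x_1,...,x_n} is a circuit of M(P) if and only if the elimination ideal P ∩ k[C] is a nonzero principal ideal whose generator has support exactly C (i.e., every variable of C appears in the generator). -/
open MvPolynomial

/-!
Write `Q = P ∩ k[C]`, a prime ideal of the factorial ring `k[C]`, and `Qᵢ = Q ∩ k[C ∖ {i}]`.
A family of variables is algebraically independent modulo `P` exactly when its elimination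
ideal vanishes, so `C` is a circuit iff `Q ≠ 0` and every `Qᵢ = 0`.

If `Q = (θ)` with `θ` involving every variable, so does every nonzero multiple of `θ`, hence
`Qᵢ = 0`. Conversely, the nonzero prime `Q` contains a prime element `θ`, which involves every
`xᵢ` since otherwise `θ ∈ Qᵢ`. If `g ∈ Q` were not a multiple of `θ`, regard both as polynomials
in `xᵢ` over `A = k[C ∖ {i}]`: the domain `A[xᵢ]/(θ)` is algebraic over `A`, so the nonzero
ideal generated by `g` in it meets `A`, which produces a nonzero element of `Qᵢ`.
-/

namespace Polynomial

theorem exists_C_ne_zero_mem_span_pair_of_not_dvd {R : Type*} [CommRing R] [IsDomain R]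
    {p q : R[X]} (hp : Prime p) (hpq : ¬ p ∣ q) :
    ∃ r : R, r ≠ 0 ∧ C r ∈ Ideal.span {p, q} := by
  set I := Ideal.span {p}
  have : I.IsPrime := (Ideal.span_singleton_prime hp.ne_zero).mpr hp
  have hX : IsAlgebraic R (Ideal.Quotient.mk I X) := ⟨p, hp.ne_zero, by
    rw [← Ideal.Quotient.mkₐ_eq_mk R, aeval_algHom_apply, aeval_X_left_apply,
      Ideal.Quotient.mkₐ_eq_mk, Ideal.Quotient.eq_zero_iff_mem]
    exact Ideal.mem_span_singleton_self p⟩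
  have hq : IsAlgebraic R (Ideal.Quotient.mk I q) := by
    have hmem : aeval (Ideal.Quotient.mk I X) q ∈ Subalgebra.algebraicClosure R (R[X] ⧸ I) :=
      Algebra.adjoin_le (Set.singleton_subset_iff.mpr hX) (aeval_mem_adjoin_singleton R _)
    rwa [← Ideal.Quotient.mkₐ_eq_mk R, aeval_algHom_apply, aeval_X_left_apply] at hmem
  have hq0 : Ideal.Quotient.mk I q ≠ 0 := by
    rwa [Ne, Ideal.Quotient.eq_zero_iff_mem, Ideal.mem_span_singleton]
  have hpq_le : I ≤ Ideal.span {p, q} := Ideal.span_mono (by simp)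
  have hmem : Ideal.Quotient.mk I q ∈ (Ideal.span {p, q}).map (Ideal.Quotient.mk I) :=
    Ideal.mem_map_of_mem _ (Ideal.subset_span (by simp))
  obtain ⟨r, hr, hr0⟩ := Submodule.exists_mem_ne_zero_of_ne_bot
    (Ideal.comap_ne_bot_of_algebraic_mem hq0 hmem hq)
  exact ⟨r, hr0, (Ideal.mem_quotient_iff_mem hpq_le).mp hr⟩

end Polynomial

namespace MvPolynomial

variable {σ R : Type*} [CommRing R]

theorem vars_subset_vars_mul_left [NoZeroDivisors R] {p q : MvPolynomial σ R} (hp : p ≠ 0)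
    (hq : q ≠ 0) : q.vars ⊆ (p * q).vars := by
  intro i hi
  rw [mem_vars_iff_degreeOf_ne_zero] at hi ⊢
  rw [degreeOf_mul_eq hp hq]
  omega

theorem exists_rename_ne_zero_mem_span_pair_of_not_dvd [IsDomain R] {θ g : MvPolynomial σ R}
    (hθ : Prime θ) (hθg : ¬ θ ∣ g) (i : σ) :
    ∃ r : MvPolynomial {j // j ≠ i} R, r ≠ 0 ∧
      rename Subtype.val r ∈ Ideal.span {θ, g} := by
  classical
  let e : MvPolynomial σ R ≃ₐ[R] Polynomial (MvPolynomial {j // j ≠ i} R) :=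
    (renameEquiv R (Equiv.optionSubtypeNe i).symm).trans (optionEquivLeft R _)
  have he : e.symm.toAlgHom.comp Polynomial.CAlgHom = rename Subtype.val := by ext; simp [e]
  have hθ' : Prime (e θ) := (MulEquiv.prime_iff e.toMulEquiv).mpr hθ
  obtain ⟨r, hr0, hr⟩ :=
    Polynomial.exists_C_ne_zero_mem_span_pair_of_not_dvd hθ' ((map_dvd_iff e).not.mpr hθg)
  refine ⟨r, hr0, ?_⟩
  have hmap := Ideal.mem_map_of_mem e.symm hr
  rw [Ideal.map_span, Set.image_pair, e.symm_apply_apply, e.symm_apply_apply] at hmap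
  rw [← he]
  exact hmap

theorem eq_span_singleton_of_comap_rename_eq_bot [IsDomain R] {Q : Ideal (MvPolynomial σ R)}
    {θ : MvPolynomial σ R} (hθ : Prime θ) (hθQ : θ ∈ Q) {i : σ}
    (hQ : Q.comap (rename (Subtype.val : {j // j ≠ i} → σ)) = ⊥) : Q = Ideal.span {θ} := by
  refine le_antisymm (fun g hg => ?_) (Ideal.span_le.mpr (Set.singleton_subset_iff.mpr hθQ))
  rw [Ideal.mem_span_singleton]
  by_contra hθg
  obtain ⟨r, hr0, hr⟩ := exists_rename_ne_zero_mem_span_pair_of_not_dvd hθ hθg i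
  have hrQ : r ∈ Q.comap (rename Subtype.val) :=
    Ideal.span_le.mpr (Set.insert_subset_iff.mpr ⟨hθQ, Set.singleton_subset_iff.mpr hg⟩) hr
  rw [hQ, Ideal.mem_bot] at hrQ
  exact hr0 hrQ

theorem mem_vars_of_mem_of_comap_rename_eq_bot {Q : Ideal (MvPolynomial σ R)}
    {θ : MvPolynomial σ R} (hθQ : θ ∈ Q) (hθ0 : θ ≠ 0) {i : σ}
    (hQ : Q.comap (rename (Subtype.val : {j // j ≠ i} → σ)) = ⊥) : i ∈ θ.vars := by
  by_contra hi
  obtain ⟨r, rfl⟩ : ∃ r : MvPolynomial {j // j ≠ i} R, rename Subtype.val r = θ :=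
    exists_rename_eq_of_vars_subset_range θ Subtype.val Subtype.val_injective
      fun j hj => ⟨⟨j, fun h => hi (h ▸ hj)⟩, rfl⟩
  have hr : r ∈ Q.comap (rename Subtype.val) := hθQ
  rw [hQ, Ideal.mem_bot] at hr
  exact hθ0 (by rw [hr, map_zero])

theorem comap_rename_span_singleton_eq_bot [IsDomain R] {θ : MvPolynomial σ R} (hθ : θ ≠ 0)
    {i : σ} (hi : i ∈ θ.vars) :
    (Ideal.span {θ}).comap (rename (Subtype.val : {j // j ≠ i} → σ)) = ⊥ := by
  classical
  refine (Submodule.eq_bot_iff _).mpr fun r hr => ?_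
  obtain ⟨c, hc⟩ := Ideal.mem_span_singleton'.mp hr
  by_contra hr0
  have hc0 : c ≠ 0 := by
    rintro rfl
    exact hr0 (rename_injective _ Subtype.val_injective (by rw [← hc, zero_mul, map_zero]))
  obtain ⟨j, -, hj⟩ :=
    Finset.mem_image.mp (vars_rename _ _ (hc ▸ vars_subset_vars_mul_left hc0 hθ hi))
  exact j.2 hj

theorem exists_eq_span_singleton_of_forall_comap_rename_eq_bot [Fintype σ] [Nonempty σ]
    [IsDomain R] [UniqueFactorizationMonoid R] {Q : Ideal (MvPolynomial σ R)} [Q.IsPrime]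
    (hQ : Q ≠ ⊥) (h : ∀ i, Q.comap (rename (Subtype.val : {j // j ≠ i} → σ)) = ⊥) :
    ∃ θ, θ ≠ 0 ∧ Q = Ideal.span {θ} ∧ θ.vars = Finset.univ := by
  obtain ⟨θ, hθQ, hθ⟩ := Ideal.IsPrime.exists_mem_prime_of_ne_bot ‹_› hQ
  obtain ⟨i⟩ := ‹Nonempty σ›
  exact ⟨θ, hθ.ne_zero, eq_span_singleton_of_comap_rename_eq_bot hθ hθQ (h i),
    Finset.eq_univ_of_forall fun j =>
      mem_vars_of_mem_of_comap_rename_eq_bot hθQ hθ.ne_zero (h j)⟩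

theorem ker_aeval_algebraMap_quotient_mk {K : Type*} [CommRing K] [Algebra R K]
    (P : Ideal (MvPolynomial σ R)) [Algebra (MvPolynomial σ R ⧸ P) K]
    [IsScalarTower R (MvPolynomial σ R ⧸ P) K] [FaithfulSMul (MvPolynomial σ R ⧸ P) K] :
    RingHom.ker (aeval fun i => algebraMap (MvPolynomial σ R ⧸ P) K (Ideal.Quotient.mk P (X i)))
      = P := by
  have h : (aeval fun i => algebraMap (MvPolynomial σ R ⧸ P) K (Ideal.Quotient.mk P (X i))) =
      (IsScalarTower.toAlgHom R _ K).comp (Ideal.Quotient.mkₐ R P) := by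
    ext; simp
  ext p
  rw [h, RingHom.mem_ker, AlgHom.comp_apply, IsScalarTower.coe_toAlgHom',
    FaithfulSMul.algebraMap_eq_zero_iff, Ideal.Quotient.mkₐ_eq_mk, Ideal.Quotient.eq_zero_iff_mem]

end MvPolynomial

section AlgebraicIndependent

variable {ι σ R A : Type*} [CommRing R] [CommRing A] [Algebra R A]

theorem algebraicIndependent_comp_iff_comap_ker_eq_bot (x : σ → A) (s : ι → σ) :
    AlgebraicIndependent R (x ∘ s) ↔
      (RingHom.ker (aeval (R := R) x)).comap (rename s) = ⊥ := by
  rw [algebraicIndependent_iff_ker_eq_bot]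
  congr!
  ext p
  simp [RingHom.mem_ker, aeval_rename]

variable (R) in
theorem forall_ssubset_algebraicIndependent_iff (x : ι → A) (C : Finset ι) :
    (∀ T : Finset ι, T ⊂ C → AlgebraicIndependent R (fun i : T => x i)) ↔
      ∀ i : C, AlgebraicIndependent R (fun j : {j : C // j ≠ i} => x j.1.1) := by
  classical
  constructor
  · intro h i
    let f : {j : C // j ≠ i} → C.erase i :=
      fun j => ⟨j.1.1, Finset.mem_erase.mpr ⟨fun h => j.2 (Subtype.ext h), j.1.2⟩⟩
    have hf : Function.Injective f := fun j j' h =>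
      Subtype.ext (Subtype.ext (congrArg (fun z : C.erase i => z.1) h))
    exact (h (C.erase i) (Finset.erase_ssubset i.2)).comp f hf
  · intro h T hT
    obtain ⟨i, hiC, hiT⟩ := Finset.exists_of_ssubset hT
    let f : T → {j : C // j ≠ ⟨i, hiC⟩} :=
      fun j => ⟨⟨j.1, hT.subset j.2⟩, fun h => hiT (Subtype.mk.inj h ▸ j.2)⟩
    have hf : Function.Injective f := fun j j' h => Subtype.ext (congrArg (fun z => z.1.1) h)
    exact (h ⟨i, hiC⟩).comp f hf

end AlgebraicIndependent

/-- A subset `C` of the variables is a circuit of the algebraic matroid `M(P)` of a prime ideal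
`P ⊆ k[x_1,...,x_n]` (a minimal set whose images in `Frac(k[x]/P)` are algebraically dependent
over `k`) if and only if the elimination ideal `P ∩ k[C]` is a nonzero principal ideal whose
generator has support exactly `C` (every variable of `C` appears in it). -/
theorem circuit_iff_principal_full_support {k : Type*} [Field k] {n : ℕ}
    (P : Ideal (MvPolynomial (Fin n) k)) [P.IsPrime] (C : Finset (Fin n))
    (a : Fin n → FractionRing (MvPolynomial (Fin n) k ⧸ P))
    (ha : ∀ i, a i = algebraMap (MvPolynomial (Fin n) k ⧸ P) _ (Ideal.Quotient.mk P (X i))) :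
    ((¬ AlgebraicIndependent k (fun i : C => a i.1)) ∧
      ∀ T : Finset (Fin n), T ⊂ C → AlgebraicIndependent k (fun i : T => a i.1))
    ↔ (∃ θ : MvPolynomial C k, θ ≠ 0 ∧
        P.comap (rename (Subtype.val : C → Fin n)).toRingHom = Ideal.span {θ} ∧
        θ.vars = Finset.univ) := by
  have hP : RingHom.ker (aeval (R := k) a) = P := by
    rw [funext ha]
    exact ker_aeval_algebraMap_quotient_mk P
  have indep_iff {ι : Type} (s : ι → Fin n) :
      AlgebraicIndependent k (a ∘ s) ↔ P.comap (rename s) = ⊥ :=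
    (algebraicIndependent_comp_iff_comap_ker_eq_bot a s).trans (by rw [hP])
  set Q := P.comap (rename (Subtype.val : C → Fin n))
  have elim_iff (i : C) : AlgebraicIndependent k (fun j : {j : C // j ≠ i} => a j.1.1) ↔
      Q.comap (rename (Subtype.val : {j // j ≠ i} → C)) = ⊥ := by
    have hQ : Q.comap (rename (Subtype.val : {j // j ≠ i} → C)) =
        P.comap (rename (Subtype.val ∘ Subtype.val)) := by
      ext; simp [Q, rename_rename]
    exact hQ ▸ indep_iff _
  change (¬ AlgebraicIndependent k (a ∘ Subtype.val) ∧ _) ↔ ∃ θ, θ ≠ 0 ∧ Q = _ ∧ _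
  rw [forall_ssubset_algebraicIndependent_iff, indep_iff]
  simp only [elim_iff]
  constructor
  · rintro ⟨hQ, hmin⟩
    have : Nonempty C :=
      not_isEmpty_iff.mp fun _ => hQ ((indep_iff _).mp algebraicIndependent_empty_type)
    exact exists_eq_span_singleton_of_forall_comap_rename_eq_bot hQ hmin
  · rintro ⟨θ, hθ0, hQθ, hvars⟩
    exact ⟨fun hQ => hθ0 (Ideal.span_singleton_eq_bot.mp (hQθ.symm.trans hQ)),
      fun i => hQθ ▸ comap_rename_span_singleton_eq_bot hθ0 (hvars ▸ Finset.mem_univ i)⟩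
end

section
/- Let P be a prime ideal of k[x_1,...,x_n] and C a circuit of the algebraic matroid M(P). Then the generator θ_C of the principal ideal P ∩ k[C] is unique up to multiplication by a nonzero element of k, and θ_C is irreducible. -/
/-!
The elimination ideal `P ∩ k[C]` is the kernel of `k[C] → Frac(k[x]/P)`, `x_i ↦ x̄_i`, so it is
prime, and it is nonzero because the images of the variables in `C` are algebraically dependent.
A generator of a nonzero principal prime ideal is a prime element, hence irreducible, and two
generators are associated; the units of `k[C]` are the nonzero constants.
-/

open MvPolynomial

namespace MvPolynomial

theorem exists_smul_eq_of_associated {σ k : Type*} [Field k] {p q : MvPolynomial σ k}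
    (h : Associated p q) : ∃ c : k, c ≠ 0 ∧ q = c • p := by
  obtain ⟨u, rfl⟩ := h
  obtain ⟨c, hc, hu⟩ := isUnit_iff_eq_C_of_isReduced.mp u.isUnit
  exact ⟨c, hc.ne_zero, by rw [hu, smul_eq_C_mul, mul_comm]⟩

theorem ker_aeval_fractionRing_quotient {σ ι k : Type*} [CommRing k]
    (P : Ideal (MvPolynomial σ k)) [P.IsPrime] (f : ι → σ) :
    RingHom.ker (aeval fun i => algebraMap (MvPolynomial σ k ⧸ P)
        (FractionRing (MvPolynomial σ k ⧸ P)) (Ideal.Quotient.mk P (X (f i)))).toRingHom =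
      P.comap (rename f).toRingHom := by
  have hfactor : (aeval fun i => algebraMap (MvPolynomial σ k ⧸ P)
        (FractionRing (MvPolynomial σ k ⧸ P)) (Ideal.Quotient.mk P (X (f i)))) =
      (IsScalarTower.toAlgHom k _ _).comp ((Ideal.Quotient.mkₐ k P).comp (rename f)) :=
    algHom_ext fun i => by simp
  rw [hfactor]
  change RingHom.ker ((algebraMap _ (FractionRing (MvPolynomial σ k ⧸ P))).comp
    ((Ideal.Quotient.mk P).comp (rename f).toRingHom)) = _
  rw [RingHom.ker_comp_of_injective _ (IsFractionRing.injective _ _),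
    ← RingHom.comap_ker, Ideal.mk_ker]

theorem algebraicIndependent_quotient_iff_comap_rename_eq_bot {σ ι k : Type*} [CommRing k]
    (P : Ideal (MvPolynomial σ k)) [P.IsPrime] (f : ι → σ) :
    AlgebraicIndependent k (fun i => algebraMap (MvPolynomial σ k ⧸ P)
        (FractionRing (MvPolynomial σ k ⧸ P)) (Ideal.Quotient.mk P (X (f i)))) ↔
      P.comap (rename f).toRingHom = ⊥ := by
  rw [algebraicIndependent_iff_ker_eq_bot, ker_aeval_fractionRing_quotient]

end MvPolynomial

theorem circuit_polynomial_unique_irreducible_general {k : Type*} [Field k] {n : ℕ}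
    (P : Ideal (MvPolynomial (Fin n) k)) [P.IsPrime] (C : Finset (Fin n))
    (a : Fin n → FractionRing (MvPolynomial (Fin n) k ⧸ P))
    (ha : ∀ i, a i = algebraMap (MvPolynomial (Fin n) k ⧸ P) _ (Ideal.Quotient.mk P (X i)))
    (hdep : ¬ AlgebraicIndependent k (fun i : C => a i.1)) :
    (∀ θ θ' : MvPolynomial C k,
        P.comap (rename (Subtype.val : C → Fin n)).toRingHom = Ideal.span {θ} →
        P.comap (rename (Subtype.val : C → Fin n)).toRingHom = Ideal.span {θ'} →
        ∃ c : k, c ≠ 0 ∧ θ' = c • θ) ∧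
    (∀ θ : MvPolynomial C k,
        P.comap (rename (Subtype.val : C → Fin n)).toRingHom = Ideal.span {θ} →
        Irreducible θ) := by
  obtain rfl := funext ha
  have hne_bot := mt (algebraicIndependent_quotient_iff_comap_rename_eq_bot P _).mpr hdep
  refine ⟨fun θ θ' hθ hθ' => ?_, fun θ hθ => ?_⟩
  · exact exists_smul_eq_of_associated (Ideal.span_singleton_eq_span_singleton.mp (hθ ▸ hθ'))
  · have hθ0 : θ ≠ 0 := by
      rintro rfl
      exact hne_bot (by rw [hθ, Ideal.span_singleton_eq_bot])
    have hprime : (Ideal.span {θ}).IsPrime := hθ ▸ Ideal.IsPrime.comap _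
    exact ((Ideal.span_singleton_prime hθ0).mp hprime).irreducible

/-- For a circuit `C` of the algebraic matroid `M(P)` of a prime ideal `P`, the generator `θ_C`
of the principal elimination ideal `P ∩ k[C]` is unique up to multiplication by a nonzero scalar
of `k`, and any generator is irreducible. -/
theorem circuit_polynomial_unique_irreducible {k : Type*} [Field k] {n : ℕ}
    (P : Ideal (MvPolynomial (Fin n) k)) [P.IsPrime] (C : Finset (Fin n))
    (a : Fin n → FractionRing (MvPolynomial (Fin n) k ⧸ P))
    (ha : ∀ i, a i = algebraMap (MvPolynomial (Fin n) k ⧸ P) _ (Ideal.Quotient.mk P (X i)))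
    (hdep : ¬ AlgebraicIndependent k (fun i : C => a i.1))
    (hmin : ∀ T : Finset (Fin n), T ⊂ C → AlgebraicIndependent k (fun i : T => a i.1)) :
    (∀ θ θ' : MvPolynomial C k,
        P.comap (rename (Subtype.val : C → Fin n)).toRingHom = Ideal.span {θ} →
        P.comap (rename (Subtype.val : C → Fin n)).toRingHom = Ideal.span {θ'} →
        ∃ c : k, c ≠ 0 ∧ θ' = c • θ) ∧
    (∀ θ : MvPolynomial C k,
        P.comap (rename (Subtype.val : C → Fin n)).toRingHom = Ideal.span {θ} →
        Irreducible θ) :=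
  circuit_polynomial_unique_irreducible_general P C a ha hdep
end

section
/- Let V = V(P) ⊆ k^n be an irreducible variety of dimension d over an algebraically closed field k of characteristic zero, with P generated by f_1,...,f_m, such that the Jacobian J(P) over the function field represents the dual of M(P). Then the non-matroidal locus NM(P) — points p ∈ V where the specialized Jacobian J(P)(p) fails to represent the dual of M(P) — is cut out on V by the ideal ∩_{B a base of M(P)} I_{n−d}(J(P){E\B}), where I_{n−d}(J{S}) is the ideal of (n−d)×(n−d) minors of the columns of J indexed by S. In particular, NM(P) is a proper closed subvariety of V. -/
/-! The `t × t` minors of a matrix with columns in `C` all vanish under a ring map `φ` into a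
field exactly when the `φ`-image of those columns has rank `< t`. The kernel of such a `φ` is
prime, so it contains `⋂_B I_{n-d}(J{E∖B})` iff it contains one of the ideals
`I_{n-d}(J{E∖B})`; for `φ = eval p` this describes the non-matroidal locus. At the generic
point of `V`, i.e. `k[x] → Frac(k[x]/P)` with kernel `P`, the Jacobian represents the dual
matroid, so the intersection is not contained in `P`, and by the Nullstellensatz some point
of `V` lies outside its zero set. -/

open Function Module Submodule MvPolynomial

theorem exists_linearIndependent_comp_of_le_finrank_span {K V ι : Type*} [Field K]
    [AddCommGroup V] [Module K V] [Finite ι] (v : ι → V) {t : ℕ}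
    (h : t ≤ finrank K (span K (Set.range v))) :
    ∃ g : Fin t → ι, LinearIndependent K (v ∘ g) := by
  obtain ⟨κ, a, ha, hspan, hli⟩ := exists_linearIndependent' K v
  have : Finite κ := .of_injective a ha
  have : Fintype κ := .ofFinite κ
  rw [← hspan, finrank_span_eq_card hli] at h
  obtain ⟨e⟩ := Embedding.nonempty_of_card_le (by simpa using h : Fintype.card (Fin t) ≤ _)
  exact ⟨a ∘ e, hli.comp e e.injective⟩

namespace Matrix

variable {A K m n : Type*} [CommRing A] [Field K]

theorem le_rank_iff_exists_det_submatrix_ne_zero [Fintype m] [Fintype n] (M : Matrix m n K)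
    (t : ℕ) :
    t ≤ M.rank ↔ ∃ (r : Fin t → m) (c : Fin t → n), Injective r ∧ Injective c ∧
      (M.submatrix r c).det ≠ 0 := by
  classical
  constructor
  · intro h
    rw [rank_eq_finrank_span_cols] at h
    obtain ⟨c, hc⟩ := exists_linearIndependent_comp_of_le_finrank_span M.col h
    have hrows : t ≤ finrank K (span K (Set.range (M.submatrix id c).row)) := by
      rw [← rank_eq_finrank_span_row, rank_eq_finrank_span_cols]
      exact ((finrank_span_eq_card hc).trans (Fintype.card_fin t)).ge
    obtain ⟨r, hr⟩ := exists_linearIndependent_comp_of_le_finrank_span _ hrows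
    refine ⟨r, c, hr.injective.of_comp, hc.injective.of_comp, ?_⟩
    exact ((isUnit_iff_isUnit_det _).mp (linearIndependent_rows_iff_isUnit.mp hr)).ne_zero
  · rintro ⟨r, c, -, -, hdet⟩
    simpa [rank_of_det_ne_zero hdet] using rank_submatrix_le M r c

def minorIdeal (M : Matrix m n A) (C : Finset n) (t : ℕ) : Ideal A :=
  Ideal.span {q | ∃ (r : Fin t → m) (c : Fin t → n), Injective r ∧ Injective c ∧
    (∀ l, c l ∈ C) ∧ q = (M.submatrix r c).det}

theorem minorIdeal_le_ker_iff [Fintype m] (M : Matrix m n A) (C : Finset n) (t : ℕ)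
    (φ : A →+* K) :
    M.minorIdeal C t ≤ RingHom.ker φ ↔ (Matrix.of fun i (j : C) => φ (M i j)).rank < t := by
  rw [minorIdeal, Ideal.span_le, ← not_le, le_rank_iff_exists_det_submatrix_ne_zero]
  push Not
  constructor
  · intro h r c hr hc
    have hq := h ⟨r, fun l => (c l : n), hr, Subtype.val_injective.comp hc, fun l => (c l).2, rfl⟩
    rwa [SetLike.mem_coe, RingHom.mem_ker, RingHom.map_det] at hq
  · rintro h q ⟨r, c, hr, hc, hcC, rfl⟩
    rw [SetLike.mem_coe, RingHom.mem_ker, RingHom.map_det]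
    exact h r (fun l => ⟨c l, hcC l⟩) hr fun l l' hll' => hc (congrArg Subtype.val hll')

end Matrix

theorem Ideal.IsPrime.iInf_le_iff {R ι : Type*} [CommRing R] [Finite ι] {p : ι → Prop}
    {I : ι → Ideal R} {Q : Ideal R} (hQ : Q.IsPrime) :
    (⨅ (i) (_ : p i), I i) ≤ Q ↔ ∃ i, p i ∧ I i ≤ Q := by
  classical
  have : Fintype ι := .ofFinite ι
  have hfin : (⨅ (i) (_ : p i), I i) = (Finset.univ.filter p).inf I := by
    simp [Finset.inf_eq_iInf]
  simp [hfin, hQ.inf_le']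

theorem MvPolynomial.exists_mem_zeroLocus_not_le_ker_eval {k σ : Type*} [Field k]
    [IsAlgClosed k] [Finite σ] {P I : Ideal (MvPolynomial σ k)} [P.IsPrime] (h : ¬I ≤ P) :
    ∃ x ∈ zeroLocus k P, ¬I ≤ RingHom.ker (eval x) := by
  rw [← IsPrime.vanishingIdeal_zeroLocus (K := k) P, SetLike.not_le_iff_exists] at h
  obtain ⟨q, hqI, hq⟩ := h
  simp only [mem_vanishingIdeal_iff, not_forall] at hq
  obtain ⟨x, hx, hqx⟩ := hq
  exact ⟨x, hx, fun hle => hqx (hle hqI)⟩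

theorem nonmatroidal_locus_general {k : Type*} [Field k] [IsAlgClosed k] {n m : ℕ}
    (f : Fin m → MvPolynomial (Fin n) k)
    (P : Ideal (MvPolynomial (Fin n) k)) [P.IsPrime]
    (hP : P = Ideal.span (Set.range f))
    (d : ℕ)
    (a : Fin n → FractionRing (MvPolynomial (Fin n) k ⧸ P))
    (hrep : ∀ S : Finset (Fin n),
      AlgebraicIndependent k (fun i : S => a i.1) ↔
        (Matrix.of fun (i : Fin m) (j : (Sᶜ : Finset (Fin n))) =>
          algebraMap (MvPolynomial (Fin n) k ⧸ P) (FractionRing (MvPolynomial (Fin n) k ⧸ P))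
            (Ideal.Quotient.mk P (pderiv (j : Fin n) (f i)))).rank = n - d)
    (NM : Ideal (MvPolynomial (Fin n) k))
    (hNM : NM = ⨅ (B : Finset (Fin n)) (_ : AlgebraicIndependent k (fun i : B => a i.1) ∧
        ∀ j ∉ B, ¬ AlgebraicIndependent k (fun i : (insert j B : Finset (Fin n)) => a i.1)),
      Ideal.span {q : MvPolynomial (Fin n) k |
        ∃ (r : Fin (n - d) → Fin m) (c : Fin (n - d) → Fin n),
          Function.Injective r ∧ Function.Injective c ∧ (∀ l, c l ∈ (Bᶜ : Finset (Fin n))) ∧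
          q = (Matrix.of fun α β => pderiv (c β) (f (r α))).det}) :
    (∀ p : Fin n → k, (∀ i, eval p (f i) = 0) →
      ((∀ q ∈ NM, eval p q = 0) ↔
        ∃ B : Finset (Fin n),
          (AlgebraicIndependent k (fun i : B => a i.1) ∧
            ∀ j ∉ B, ¬ AlgebraicIndependent k (fun i : (insert j B : Finset (Fin n)) => a i.1)) ∧
          (Matrix.of fun (i : Fin m) (j : (Bᶜ : Finset (Fin n))) =>
            eval p (pderiv (j : Fin n) (f i))).rank < n - d)) ∧
    (∃ p₀ : Fin n → k, (∀ i, eval p₀ (f i) = 0) ∧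
      ¬ ∃ B : Finset (Fin n),
          (AlgebraicIndependent k (fun i : B => a i.1) ∧
            ∀ j ∉ B, ¬ AlgebraicIndependent k (fun i : (insert j B : Finset (Fin n)) => a i.1)) ∧
          (Matrix.of fun (i : Fin m) (j : (Bᶜ : Finset (Fin n))) =>
            eval p₀ (pderiv (j : Fin n) (f i))).rank < n - d) := by
  let J : Matrix (Fin m) (Fin n) (MvPolynomial (Fin n) k) := .of fun i j => pderiv j (f i)
  have hlocus : ∀ {K : Type _} [Field K] (φ : MvPolynomial (Fin n) k →+* K),
      NM ≤ RingHom.ker φ ↔ ∃ B : Finset (Fin n),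
        (AlgebraicIndependent k (fun i : B => a i.1) ∧
          ∀ j ∉ B, ¬ AlgebraicIndependent k (fun i : (insert j B : Finset (Fin n)) => a i.1)) ∧
        (Matrix.of fun (i : Fin m) (j : (Bᶜ : Finset (Fin n))) =>
          φ (pderiv (j : Fin n) (f i))).rank < n - d := fun φ => by
    rw [hNM, (RingHom.ker_isPrime φ).iInf_le_iff]
    -- each ideal in `hNM` unfolds to `J.minorIdeal Bᶜ (n - d)`
    exact exists_congr fun B => and_congr_right fun _ => J.minorIdeal_le_ker_iff Bᶜ (n - d) φ
  have hgeneric : ¬NM ≤ P := by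
    rw [← Ideal.mk_ker (I := P), ← RingHom.ker_comp_of_injective _
      (IsFractionRing.injective _ (FractionRing (MvPolynomial (Fin n) k ⧸ P))), hlocus]
    rintro ⟨B, hB, hrank⟩
    exact hrank.ne ((hrep B).mp hB.1)
  obtain ⟨p₀, hp₀, hp₀NM⟩ := exists_mem_zeroLocus_not_le_ker_eval hgeneric
  refine ⟨fun p _ => ?_, p₀, fun i => hp₀ (f i) (hP ▸ Ideal.subset_span ⟨i, rfl⟩), ?_⟩
  · simpa only [SetLike.le_def, RingHom.mem_ker] using hlocus (eval p)
  · rwa [← hlocus]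

/-- The non-matroidal locus. Let `V = V(P)` be irreducible of dimension `d` over an algebraically
closed field of characteristic zero, with `P = (f_1,...,f_m)` prime, and suppose the Jacobian over
the function field represents the dual of `M(P)` (hypothesis `hrep`). A point `p ∈ V` lies in the
non-matroidal locus (the specialized Jacobian fails to represent the dual matroid, i.e. for some
base `B` the columns of the complement drop below rank `n−d`) iff `p` is a zero of the ideal
`⋂_B I_{n−d}(J{E∖B})`, the intersection over bases `B` of the ideals of `(n−d)×(n−d)` minors of
the Jacobian columns outside `B`. In particular the non-matroidal locus is a proper subvariety:
some point of `V` is not in it. -/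
theorem nonmatroidal_locus {k : Type*} [Field k] [IsAlgClosed k] [CharZero k] {n m : ℕ}
    (f : Fin m → MvPolynomial (Fin n) k)
    (P : Ideal (MvPolynomial (Fin n) k)) [P.IsPrime]
    (hP : P = Ideal.span (Set.range f))
    (d : ℕ) (hdn : d ≤ n)
    (hdim : ringKrullDim (MvPolynomial (Fin n) k ⧸ P) = (d : WithBot (WithTop ℕ)))
    (a : Fin n → FractionRing (MvPolynomial (Fin n) k ⧸ P))
    (ha : ∀ i, a i = algebraMap (MvPolynomial (Fin n) k ⧸ P) _ (Ideal.Quotient.mk P (X i)))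
    (hrep : ∀ S : Finset (Fin n),
      AlgebraicIndependent k (fun i : S => a i.1) ↔
        (Matrix.of fun (i : Fin m) (j : (Sᶜ : Finset (Fin n))) =>
          algebraMap (MvPolynomial (Fin n) k ⧸ P) (FractionRing (MvPolynomial (Fin n) k ⧸ P))
            (Ideal.Quotient.mk P (pderiv (j : Fin n) (f i)))).rank = n - d)
    (NM : Ideal (MvPolynomial (Fin n) k))
    (hNM : NM = ⨅ (B : Finset (Fin n)) (_ : AlgebraicIndependent k (fun i : B => a i.1) ∧
        ∀ j ∉ B, ¬ AlgebraicIndependent k (fun i : (insert j B : Finset (Fin n)) => a i.1)),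
      Ideal.span {q : MvPolynomial (Fin n) k |
        ∃ (r : Fin (n - d) → Fin m) (c : Fin (n - d) → Fin n),
          Function.Injective r ∧ Function.Injective c ∧ (∀ l, c l ∈ (Bᶜ : Finset (Fin n))) ∧
          q = (Matrix.of fun α β => pderiv (c β) (f (r α))).det}) :
    (∀ p : Fin n → k, (∀ i, eval p (f i) = 0) →
      ((∀ q ∈ NM, eval p q = 0) ↔
        ∃ B : Finset (Fin n),
          (AlgebraicIndependent k (fun i : B => a i.1) ∧
            ∀ j ∉ B, ¬ AlgebraicIndependent k (fun i : (insert j B : Finset (Fin n)) => a i.1)) ∧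
          (Matrix.of fun (i : Fin m) (j : (Bᶜ : Finset (Fin n))) =>
            eval p (pderiv (j : Fin n) (f i))).rank < n - d)) ∧
    (∃ p₀ : Fin n → k, (∀ i, eval p₀ (f i) = 0) ∧
      ¬ ∃ B : Finset (Fin n),
          (AlgebraicIndependent k (fun i : B => a i.1) ∧
            ∀ j ∉ B, ¬ AlgebraicIndependent k (fun i : (insert j B : Finset (Fin n)) => a i.1)) ∧
          (Matrix.of fun (i : Fin m) (j : (Bᶜ : Finset (Fin n))) =>
            eval p₀ (pderiv (j : Fin n) (f i))).rank < n - d) :=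
  nonmatroidal_locus_general f P hP d a hrep NM hNM
end

section
/- The non-matroidal locus of the torus defined by P = ((x²+y²+z²+3)² − 16(x²+y²)) ⊆ ℝ[x,y,z] is the subvariety of the torus where the polynomial xyz·(−x⁴−2x²y²−y⁴−2x²z²−2y²z²−z⁴+2x²+2y²+2z²+15) vanishes; its real points form exactly 8 circles on the torus, given by the ideals (x, y²+z²±4y+3), (y, x²+z²±4x+3), (z, x²+y²−9), (z, x²+y²−1), (z∓1, x²+y²−4). -/
/-!
The partial derivatives of the torus polynomial are `4x(s - 5)`, `4y(s - 5)` and `4z(s + 3)`,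
where `s = x² + y² + z²`, so the polynomial `xyz·(−x⁴ − ⋯ + 15) = −xyz(s − 5)(s + 3)` is their
lcm. Since `s + 3 > 0` over `ℝ`, the locus is the union of the torus' intersections with the
three coordinate planes and with the sphere `s = 5`. The torus polynomial factors on each
coordinate plane into two circles, and on the sphere it reduces to `64 − 16(x² + y²)`, which
cuts the sphere in the two circles `z = ±1`.
-/

section Torus

variable {R : Type*} [CommRing R]

def torus (x y z : R) : R := (x ^ 2 + y ^ 2 + z ^ 2 + 3) ^ 2 - 16 * (x ^ 2 + y ^ 2)

theorem torus_comm (x y z : R) : torus x y z = torus y x z := by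
  unfold torus
  ring

variable [NoZeroDivisors R]

theorem torus_eq_zero_and_x_eq_zero_iff (x y z : R) :
    torus x y z = 0 ∧ x = 0 ↔
      x = 0 ∧ y ^ 2 + z ^ 2 + 4 * y + 3 = 0 ∨ x = 0 ∧ y ^ 2 + z ^ 2 - 4 * y + 3 = 0 := by
  rw [← and_or_left, and_comm]
  refine and_congr_right fun hx => ?_
  rw [← mul_eq_zero, torus, hx]
  constructor <;> intro h <;> linear_combination h

theorem torus_eq_zero_and_y_eq_zero_iff (x y z : R) :
    torus x y z = 0 ∧ y = 0 ↔
      y = 0 ∧ x ^ 2 + z ^ 2 + 4 * x + 3 = 0 ∨ y = 0 ∧ x ^ 2 + z ^ 2 - 4 * x + 3 = 0 := by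
  rw [torus_comm, torus_eq_zero_and_x_eq_zero_iff]

theorem torus_eq_zero_and_z_eq_zero_iff (x y z : R) :
    torus x y z = 0 ∧ z = 0 ↔
      z = 0 ∧ x ^ 2 + y ^ 2 - 9 = 0 ∨ z = 0 ∧ x ^ 2 + y ^ 2 - 1 = 0 := by
  rw [← and_or_left, and_comm]
  refine and_congr_right fun hz => ?_
  rw [← mul_eq_zero, torus, hz]
  constructor <;> intro h <;> linear_combination h

theorem torus_eq_zero_and_sq_sum_eq_five_iff [CharZero R] (x y z : R) :
    torus x y z = 0 ∧ x ^ 2 + y ^ 2 + z ^ 2 = 5 ↔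
      z + 1 = 0 ∧ x ^ 2 + y ^ 2 - 4 = 0 ∨ z - 1 = 0 ∧ x ^ 2 + y ^ 2 - 4 = 0 := by
  rw [← or_and_right, ← mul_eq_zero, torus]
  constructor
  · rintro ⟨hT, hs⟩
    have hr : x ^ 2 + y ^ 2 - 4 = 0 := by
      have h16r : (16 : R) * (x ^ 2 + y ^ 2 - 4) = 0 := by
        linear_combination -hT + (x ^ 2 + y ^ 2 + z ^ 2 + 11) * hs
      exact (mul_eq_zero.1 h16r).resolve_left (by norm_num)
    exact ⟨by linear_combination hs - hr, hr⟩
  · rintro ⟨hz, hr⟩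
    have hs : x ^ 2 + y ^ 2 + z ^ 2 = 5 := by linear_combination hz + hr
    exact ⟨by linear_combination (x ^ 2 + y ^ 2 + z ^ 2 + 11) * hs - 16 * hr, hs⟩

end Torus

theorem mul_quartic_eq_zero_iff {K : Type*} [Field K] [LinearOrder K] [IsStrictOrderedRing K]
    (x y z : K) :
    x * y * z * (-(x ^ 4) - 2 * x ^ 2 * y ^ 2 - y ^ 4 - 2 * x ^ 2 * z ^ 2
      - 2 * y ^ 2 * z ^ 2 - z ^ 4 + 2 * x ^ 2 + 2 * y ^ 2 + 2 * z ^ 2 + 15) = 0 ↔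
      x = 0 ∨ y = 0 ∨ z = 0 ∨ x ^ 2 + y ^ 2 + z ^ 2 = 5 := by
  have hpos : 0 < x ^ 2 + y ^ 2 + z ^ 2 + 3 := by positivity
  have hfactor : -(x ^ 4) - 2 * x ^ 2 * y ^ 2 - y ^ 4 - 2 * x ^ 2 * z ^ 2 - 2 * y ^ 2 * z ^ 2
      - z ^ 4 + 2 * x ^ 2 + 2 * y ^ 2 + 2 * z ^ 2 + 15 =
      -((x ^ 2 + y ^ 2 + z ^ 2 + 3) * (x ^ 2 + y ^ 2 + z ^ 2 - 5)) := by ring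
  simp only [hfactor, mul_eq_zero, neg_eq_zero, hpos.ne', false_or, sub_eq_zero, or_assoc]

/-- The non-matroidal locus of the torus `((x²+y²+z²+3)² − 16(x²+y²) = 0)` in `ℝ³` is the
subvariety where `xyz·(−x⁴−2x²y²−y⁴−2x²z²−2y²z²−z⁴+2x²+2y²+2z²+15)` vanishes, and its real
points are exactly the 8 circles cut out by the ideals `(x, y²+z²±4y+3)`, `(y, x²+z²±4x+3)`,
`(z, x²+y²−9)`, `(z, x²+y²−1)`, `(z∓1, x²+y²−4)`. -/
theorem torus_nonmatroidal_locus :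
    {p : Fin 3 → ℝ |
        (p 0 ^ 2 + p 1 ^ 2 + p 2 ^ 2 + 3) ^ 2 - 16 * (p 0 ^ 2 + p 1 ^ 2) = 0 ∧
        p 0 * p 1 * p 2 *
          (-(p 0 ^ 4) - 2 * p 0 ^ 2 * p 1 ^ 2 - p 1 ^ 4 - 2 * p 0 ^ 2 * p 2 ^ 2
            - 2 * p 1 ^ 2 * p 2 ^ 2 - p 2 ^ 4
            + 2 * p 0 ^ 2 + 2 * p 1 ^ 2 + 2 * p 2 ^ 2 + 15) = 0} =
      {p : Fin 3 → ℝ | p 0 = 0 ∧ p 1 ^ 2 + p 2 ^ 2 + 4 * p 1 + 3 = 0} ∪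
      {p : Fin 3 → ℝ | p 0 = 0 ∧ p 1 ^ 2 + p 2 ^ 2 - 4 * p 1 + 3 = 0} ∪
      {p : Fin 3 → ℝ | p 1 = 0 ∧ p 0 ^ 2 + p 2 ^ 2 + 4 * p 0 + 3 = 0} ∪
      {p : Fin 3 → ℝ | p 1 = 0 ∧ p 0 ^ 2 + p 2 ^ 2 - 4 * p 0 + 3 = 0} ∪
      {p : Fin 3 → ℝ | p 2 = 0 ∧ p 0 ^ 2 + p 1 ^ 2 - 9 = 0} ∪
      {p : Fin 3 → ℝ | p 2 = 0 ∧ p 0 ^ 2 + p 1 ^ 2 - 1 = 0} ∪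
      {p : Fin 3 → ℝ | p 2 + 1 = 0 ∧ p 0 ^ 2 + p 1 ^ 2 - 4 = 0} ∪
      {p : Fin 3 → ℝ | p 2 - 1 = 0 ∧ p 0 ^ 2 + p 1 ^ 2 - 4 = 0} := by
  ext p
  simp only [Set.mem_ofPred_eq, Set.mem_union]
  change torus (p 0) (p 1) (p 2) = 0 ∧ _ ↔ _
  rw [mul_quartic_eq_zero_iff, and_or_left, and_or_left, and_or_left,
    torus_eq_zero_and_x_eq_zero_iff, torus_eq_zero_and_y_eq_zero_iff,
    torus_eq_zero_and_z_eq_zero_iff, torus_eq_zero_and_sq_sum_eq_five_iff]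
  simp only [or_assoc]
end
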